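/- For γ ≥ 1 and any ρ ∈ (0,1), the quantity f(ρ) := ρ(1-ρ)²h'(ρ) - ℓ(ρ)² is negative, where ℓ(ρ)² = 2(1-ρ)(h(1) - h(ρ))/(1+ρ) = -2(1-ρ)h(ρ)/(1+ρ). Equivalently, f(ρ) = ((1-ρ)/(1+ρ))·f̃(ρ) with f̃(ρ) = (γ+1)h(ρ) - (γ-1)ρ²h(ρ) + 1 - ρ², and f(ρ) < 0 on (0,1). -/

import Mathlib

open Set

/-! With `α = γ - 1` and `t = ρ^α` one has `ρ h'(ρ) = t = α h + 1`, so `f` and `f̃` are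
polynomials in `h` and `t`; this gives the factorisation and `f̃ = (1 - ρ²) t + 2h`.
As a function of `log ρ`, `h` is convex and vanishes at `0`, so it lies below its tangent
line there: `h ≤ t log ρ`. Hence `f̃ ≤ t (1 - ρ² + log ρ²) < 0`. -/

/-- Polytropic enthalpy: `h(ρ) = (ρ^(γ-1) - 1)/(γ-1)` for `γ > 1`, `log ρ` for `γ = 1`. -/
noncomputable def enthalpy (γ ρ : ℝ) : ℝ :=
  if γ = 1 then Real.log ρ else (ρ ^ (γ - 1) - 1) / (γ - 1)

/-- `ℓ(ρ)² = 2(1-ρ)(-h(ρ))/(1+ρ)`: the square of the shock-strength function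
connecting density `ρ` to density `1`. -/
noncomputable def ellOneSq (γ ρ : ℝ) : ℝ :=
  2 * (1 - ρ) * (-(enthalpy γ ρ)) / (1 + ρ)

/-- `f(ρ) = ρ(1-ρ)²h'(ρ) - ℓ(ρ)²` with `h'(ρ) = ρ^(γ-2)`. -/
noncomputable def fshock (γ ρ : ℝ) : ℝ :=
  ρ * (1 - ρ) ^ 2 * ρ ^ (γ - 2) - ellOneSq γ ρ

/-- `f̃(ρ) = (γ+1)h(ρ) - (γ-1)ρ²h(ρ) + 1 - ρ²`. -/
noncomputable def ftilde (γ ρ : ℝ) : ℝ :=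
  (γ + 1) * enthalpy γ ρ - (γ - 1) * ρ ^ 2 * enthalpy γ ρ + (1 - ρ ^ 2)

lemma sub_one_mul_enthalpy_add_one (γ ρ : ℝ) :
    (γ - 1) * enthalpy γ ρ + 1 = ρ ^ (γ - 1) := by
  unfold enthalpy
  split_ifs with hγ
  · simp [hγ]
  · field_simp [sub_ne_zero.mpr hγ]
    ring

lemma ftilde_eq (γ ρ : ℝ) :
    ftilde γ ρ = (1 - ρ ^ 2) * ρ ^ (γ - 1) + 2 * enthalpy γ ρ := by
  rw [← sub_one_mul_enthalpy_add_one γ ρ, ftilde]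
  ring

section

variable {γ ρ : ℝ}

lemma enthalpy_le_rpow_mul_log (hγ : 1 ≤ γ) (hρ : 0 < ρ) :
    enthalpy γ ρ ≤ ρ ^ (γ - 1) * Real.log ρ := by
  unfold enthalpy
  split_ifs with hγ1
  · simp [hγ1]
  · have hα : 0 < γ - 1 := sub_pos.mpr (lt_of_le_of_ne hγ (Ne.symm hγ1))
    set x := (γ - 1) * Real.log ρ
    have ht : ρ ^ (γ - 1) = Real.exp x := by
      rw [Real.rpow_def_of_pos hρ, mul_comm]
    have htangent : Real.exp x * (1 - x) ≤ 1 := by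
      have := Real.add_one_le_exp (-x)
      calc Real.exp x * (1 - x) ≤ Real.exp x * Real.exp (-x) := by
            gcongr; linarith
        _ = 1 := by rw [← Real.exp_add, add_neg_cancel, Real.exp_zero]
    rw [div_le_iff₀ hα, ht]
    linarith

lemma ftilde_neg (hγ : 1 ≤ γ) (hρ0 : 0 < ρ) (hρ1 : ρ < 1) : ftilde γ ρ < 0 := by
  have hlog : Real.log (ρ ^ 2) < ρ ^ 2 - 1 :=
    Real.log_lt_sub_one_of_pos (by positivity) (by nlinarith)
  rw [Real.log_pow, Nat.cast_ofNat] at hlog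
  have ht : 0 < ρ ^ (γ - 1) := Real.rpow_pos_of_pos hρ0 _
  calc ftilde γ ρ = (1 - ρ ^ 2) * ρ ^ (γ - 1) + 2 * enthalpy γ ρ := ftilde_eq γ ρ
    _ ≤ ρ ^ (γ - 1) * (1 - ρ ^ 2 + 2 * Real.log ρ) := by
      nlinarith [enthalpy_le_rpow_mul_log hγ hρ0]
    _ < 0 := mul_neg_of_pos_of_neg ht (by linarith)

lemma fshock_eq_mul_ftilde (γ : ℝ) (hρ : 0 < ρ) :
    fshock γ ρ = ((1 - ρ) / (1 + ρ)) * ftilde γ ρ := by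
  have hderiv : ρ * ρ ^ (γ - 2) = ρ ^ (γ - 1) := by
    rw [show γ - 1 = 1 + (γ - 2) by ring, Real.rpow_add hρ, Real.rpow_one]
  rw [fshock, ellOneSq, ftilde_eq γ ρ, mul_right_comm, hderiv,
    ← sub_one_mul_enthalpy_add_one γ ρ]
  field_simp
  ring

end

/-- For `γ ≥ 1` and `ρ ∈ (0,1)`: `f(ρ) = ((1-ρ)/(1+ρ))·f̃(ρ)` and `f(ρ) < 0`. -/
theorem fshock_eq_and_neg (γ : ℝ) (hγ : 1 ≤ γ) :
    ∀ ρ ∈ Set.Ioo (0 : ℝ) 1,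
      fshock γ ρ = ((1 - ρ) / (1 + ρ)) * ftilde γ ρ ∧ fshock γ ρ < 0 := by
  rintro ρ ⟨hρ0, hρ1⟩
  have hfactor : 0 < (1 - ρ) / (1 + ρ) := div_pos (by linarith) (by linarith)
  rw [fshock_eq_mul_ftilde γ hρ0]
  exact ⟨rfl, mul_neg_of_pos_of_neg hfactor (ftilde_neg hγ hρ0 hρ1)⟩
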